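/- Let $K$ be a complete discrete valuation field of mixed characteristic $(0,p)$ with absolute ramification index $e$, and let $\mathcal{G}$ be a finite flat group scheme over $\mathcal{O}_K$ killed by $p$. Then the lower ramification subgroup $\mathcal{G}_i$ vanishes for all rational $i > e/(p-1)$. -/

import Mathlib

/-!
Write a point `f` as `1 + δ` in the convolution ring of `O`-linear maps `B → Ō`. Being killed
by `p` means `(1 + δ) ^ p = 1`, i.e. `p • δ = -∑_{2 ≤ k ≤ p} (p choose k) • δ ^ k`. Since `p`
divides `p choose k` for `0 < k < p` and `v p = e`, a lower bound `t ≥ i` for `v ∘ δ` improves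
to `min (2 t) (p t - e) ≥ t + c` with `c = min i ((p - 1) i - e) > 0`, the positivity coming
from `i > e / (p - 1)`. Iterating, `v ∘ δ = ⊤`, so `δ = 0`.
-/

open scoped TensorProduct

/-- Convolution product of two points of an affine group (bi)algebra `A` with values in a
commutative `O`-algebra `C`. -/
noncomputable def convMul (O A C : Type) [CommRing O] [CommRing A] [CommRing C]
    [Bialgebra O A] [Algebra O C] (f g : A →ₐ[O] C) : A →ₐ[O] C :=
  (Algebra.TensorProduct.productMap f g).comp (Bialgebra.comulAlgHom O A)

/-- `n`-fold convolution power of a point; `convPow 0 f` is the unit (zero) point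
given by the counit. -/
noncomputable def convPow (O A C : Type) [CommRing O] [CommRing A] [CommRing C]
    [Bialgebra O A] [Algebra O C] (n : ℕ) (f : A →ₐ[O] C) : A →ₐ[O] C :=
  n.rec ((Algebra.ofId O C).comp (Bialgebra.counitAlgHom O A))
    (fun _ ih => convMul O A C f ih)

open WithConv

section Convolution

variable {O A C : Type} [CommRing O] [CommRing A] [CommRing C] [Bialgebra O A] [Algebra O C]

theorem convMul_eq_ofConv_mul (f g : A →ₐ[O] C) :
    convMul O A C f g = ofConv (toConv f * toConv g) := by
  rw [convMul, Algebra.TensorProduct.productMap_eq_comp_map]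
  rfl

theorem convPow_eq_ofConv_pow (n : ℕ) (f : A →ₐ[O] C) :
    convPow O A C n f = ofConv (toConv f ^ n) := by
  induction n with
  | zero => rfl
  | succ n ih =>
    change convMul O A C f (convPow O A C n f) = _
    rw [convMul_eq_ofConv_mul, ih, pow_succ']

end Convolution

theorem nsmul_eq_neg_sum_of_one_add_pow_eq_one {R : Type*} [Ring R] {x : R} {n : ℕ}
    (h : (1 + x) ^ n = 1) : n • x = -∑ k ∈ Finset.Ico 2 (n + 1), n.choose k • x ^ k := by
  rcases Nat.eq_zero_or_pos n with rfl | hn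
  · simp
  rw [add_comm, (Commute.one_right x).add_pow,
    ← Finset.sum_range_add_sum_Ico _ (by omega : 2 ≤ n + 1)] at h
  simp only [one_pow, mul_one, ← nsmul_eq_mul', Finset.sum_range_succ, Finset.sum_range_zero,
    Nat.choose_zero_right, Nat.choose_one_right, pow_zero, pow_one, one_smul, zero_add] at h
  rw [eq_neg_iff_add_eq_zero]
  simpa [add_assoc] using h

namespace AddValuation

variable {R C A Γ₀ : Type*} [CommSemiring R] [AddCommMonoid C] [Module R C] [CommRing A]
  [Algebra R A] [LinearOrderedAddCommMonoidWithTop Γ₀] (v : AddValuation A Γ₀)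

theorem le_convMul_apply [CoalgebraStruct R C] {f g : WithConv (C →ₗ[R] A)} {s t : Γ₀}
    (hf : ∀ x, s ≤ v (f x)) (hg : ∀ x, t ≤ v (g x)) (x : C) : s + t ≤ v ((f * g) x) := by
  rw [LinearMap.convMul_apply]
  induction Coalgebra.comul (R := R) x using TensorProduct.induction_on with
  | zero => simp
  | tmul a b =>
    rw [TensorProduct.map_tmul, LinearMap.mul'_apply, v.map_mul]
    exact add_le_add (hf a) (hg b)
  | add y z hy hz =>
    rw [_root_.map_add, _root_.map_add]
    exact v.map_le_add hy hz

theorem nsmul_le_convPow_apply [Coalgebra R C] (hv : ∀ r : R, 0 ≤ v (algebraMap R A r))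
    {f : WithConv (C →ₗ[R] A)} {t : Γ₀} (hf : ∀ x, t ≤ v (f x)) (n : ℕ) (x : C) :
    n • t ≤ v ((f ^ n) x) := by
  induction n generalizing x with
  | zero => simpa using hv _
  | succ n ih =>
    rw [pow_succ', succ_nsmul']
    exact v.le_convMul_apply hf ih x

theorem map_le_map_of_dvd (hv : ∀ r : R, 0 ≤ v (algebraMap R A r)) {a b : R} (h : a ∣ b) :
    v (algebraMap R A a) ≤ v (algebraMap R A b) := by
  obtain ⟨c, rfl⟩ := h
  rw [_root_.map_mul, v.map_mul]
  exact le_add_of_nonneg_right (hv c)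

theorem map_eq_map_of_span_singleton_eq (hv : ∀ r : R, 0 ≤ v (algebraMap R A r)) {a b : R}
    (h : Ideal.span {a} = Ideal.span {b}) : v (algebraMap R A a) = v (algebraMap R A b) :=
  le_antisymm (v.map_le_map_of_dvd hv (Ideal.span_singleton_le_span_singleton.1 h.ge))
    (v.map_le_map_of_dvd hv (Ideal.span_singleton_le_span_singleton.1 h.le))

end AddValuation

theorem WithTop.eq_top_of_forall_add_nat_mul_le {K : Type*} [Field K] [LinearOrder K]
    [IsStrictOrderedRing K] [Archimedean K] {a c : K} (hc : 0 < c) {x : WithTop K}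
    (h : ∀ n : ℕ, ((a + n * c : K) : WithTop K) ≤ x) : x = ⊤ := by
  by_contra hx
  obtain ⟨q, rfl⟩ := WithTop.ne_top_iff_exists.1 hx
  obtain ⟨n, hn⟩ := Archimedean.arch (q - a) hc
  have := WithTop.coe_le_coe.1 (h (n + 1))
  rw [nsmul_eq_mul] at hn
  push_cast at this
  linarith

namespace AddValuation

variable {R C A : Type*} [CommSemiring R] [AddCommMonoid C] [Module R C] [Coalgebra R C]
  [CommRing A] [Algebra R A] (v : AddValuation A (WithTop ℚ))

theorem min_le_apply_of_one_add_pow_eq_one (hv : ∀ r : R, 0 ≤ v (algebraMap R A r))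
    {p : ℕ} (hp : p.Prime) {e : ℚ} (hvp : v (p : A) = e) {δ : WithConv (C →ₗ[R] A)}
    (hδ : (1 + δ) ^ p = 1) {t : ℚ} (ht : 0 ≤ t) (hδt : ∀ x, (t : WithTop ℚ) ≤ v (δ x))
    (x : C) : ((min (2 * t) (p * t - e) : ℚ) : WithTop ℚ) ≤ v (δ x) := by
  have hv_nat (n : ℕ) : 0 ≤ v (n : A) := by simpa using hv n
  have hpow (k : ℕ) (y : C) : ((k * t : ℚ) : WithTop ℚ) ≤ v ((δ ^ k) y) := by
    simpa [← WithTop.coe_nsmul] using v.nsmul_le_convPow_apply hv hδt k y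
  have hterm : ∀ k ∈ Finset.Ico 2 (p + 1),
      ((e + min (2 * t) (p * t - e) : ℚ) : WithTop ℚ) ≤ v (p.choose k • (δ ^ k) x) := by
    intro k hk
    obtain ⟨hk2, hkp⟩ := Finset.mem_Ico.1 hk
    rw [nsmul_eq_mul, v.map_mul]
    rcases (Nat.lt_succ_iff.1 hkp).lt_or_eq with hkp | hkp
    · obtain ⟨u, hu⟩ := hp.dvd_choose_self (by omega) hkp
      rw [hu, Nat.cast_mul, v.map_mul, hvp]
      refine le_trans ?_ (add_le_add (le_add_of_nonneg_right (hv_nat u)) (hpow k x))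
      have : (2 : ℚ) * t ≤ k * t := mul_le_mul_of_nonneg_right (by exact_mod_cast hk2) ht
      exact_mod_cast (show e + min (2 * t) (p * t - e) ≤ e + k * t by
        linarith [min_le_left (2 * t) (p * t - e)])
    · rw [hkp, Nat.choose_self, Nat.cast_one, v.map_one, zero_add]
      refine le_trans ?_ (hpow p x)
      exact_mod_cast (show e + min (2 * t) (p * t - e) ≤ p * t by
        linarith [min_le_right (2 * t) (p * t - e)])
  have hsum : v ((p • δ) x) = e + v (δ x) := by
    rw [ofConv_smul, LinearMap.smul_apply, nsmul_eq_mul, v.map_mul, hvp]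
  rw [nsmul_eq_neg_sum_of_one_add_pow_eq_one hδ] at hsum
  simp only [ofConv_neg, ofConv_sum, ofConv_smul, LinearMap.neg_apply, LinearMap.sum_apply,
    LinearMap.smul_apply, v.map_neg] at hsum
  have := (v.map_le_sum hterm).trans hsum.le
  rw [WithTop.coe_add] at this
  exact (WithTop.add_le_add_iff_left (WithTop.coe_ne_top)).1 this

theorem eq_zero_of_one_add_pow_eq_one (hv : ∀ r : R, 0 ≤ v (algebraMap R A r))
    (hv_top : ∀ a : A, v a = ⊤ → a = 0) {p : ℕ} (hp : p.Prime) {e : ℚ} (hvp : v (p : A) = e)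
    {δ : WithConv (C →ₗ[R] A)} (hδ : (1 + δ) ^ p = 1) {i : ℚ} (hi : e / (p - 1) < i)
    (hδi : ∀ x, (i : WithTop ℚ) ≤ v (δ x)) : δ = 0 := by
  have hp1 : (0 : ℚ) < p - 1 := by linarith [show (2 : ℚ) ≤ p by exact_mod_cast hp.two_le]
  have he : 0 ≤ e := by
    have := hv p
    rw [map_natCast, hvp] at this
    exact_mod_cast this
  have hei : e < (p - 1) * i := by rw [div_lt_iff₀ hp1] at hi; linarith
  have hi0 : 0 < i := (div_nonneg he hp1.le).trans_lt hi
  set c := min i ((p - 1) * i - e)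
  have hc0 : 0 < c := lt_min hi0 (by linarith)
  have hbound (n : ℕ) (x : C) : ((i + n * c : ℚ) : WithTop ℚ) ≤ v (δ x) := by
    induction n generalizing x with
    | zero => simpa using hδi x
    | succ n ih =>
      have hnc : 0 ≤ (n : ℚ) * c := by positivity
      refine le_trans ?_ (v.min_le_apply_of_one_add_pow_eq_one hv hp hvp hδ
        (by linarith) ih x)
      rw [WithTop.coe_le_coe, le_min_iff]
      push_cast
      constructor <;> nlinarith [min_le_left i ((p - 1) * i - e),
        min_le_right i ((p - 1) * i - e)]
  ext x
  exact hv_top _ (WithTop.eq_top_of_forall_add_nat_mul_le hc0 (hbound · x))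

end AddValuation

theorem stmt8_general (p e : ℕ) [Fact p.Prime]
    (O : Type) [CommRing O]
    (π : O)
    (hram : Ideal.span {(p : O)} = Ideal.span {π} ^ e)
    (B : Type) [CommRing B] [HopfAlgebra O B]
    (hkill : ∀ (C : Type) [CommRing C] [Algebra O C] (f : B →ₐ[O] C),
      convPow O B C p f = (Algebra.ofId O C).comp (Bialgebra.counitAlgHom O B))
    (Obar : Type) [CommRing Obar] [Algebra O Obar]
    (v : AddValuation Obar (WithTop ℚ))
    (hvπ : v (algebraMap O Obar π) = ((1 : ℚ) : WithTop ℚ))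
    (hv0 : ∀ x : Obar, 0 ≤ v x)
    (hvtop : ∀ x : Obar, v x = ⊤ → x = 0)
    (i : ℚ) (hi : (e : ℚ) / ((p : ℚ) - 1) < i)
    (I : Ideal Obar) (hI : ∀ x : Obar, x ∈ I ↔ ((i : ℚ) : WithTop ℚ) ≤ v x)
    (f : B →ₐ[O] Obar)
    (hf : (Ideal.Quotient.mkₐ O I).comp f =
      (Ideal.Quotient.mkₐ O I).comp
        ((Algebra.ofId O Obar).comp (Bialgebra.counitAlgHom O B))) :
    f = (Algebra.ofId O Obar).comp (Bialgebra.counitAlgHom O B) := by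
  set δ : WithConv (B →ₗ[O] Obar) := toConv f.toLinearMap - 1 with hδ
  have hvp : v (p : Obar) = (e : ℚ) := by
    rw [← map_natCast (algebraMap O Obar), v.map_eq_map_of_span_singleton_eq (fun _ => hv0 _)
      (hram.trans (Ideal.span_singleton_pow π e)), map_pow, v.map_pow, hvπ]
    simp
  have hδp : (1 + δ) ^ p = 1 := by
    have := congrArg (toConv ·.toLinearMap) (hkill Obar f)
    simp only [convPow_eq_ofConv_pow, AlgHom.toLinearMap_convPow] at this
    rw [hδ, add_sub_cancel, this]
    rfl
  have hδi (x : B) : (i : WithTop ℚ) ≤ v (δ x) :=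
    (hI _).1 (Ideal.Quotient.eq.1 (congrArg (· x) hf))
  have hf1 := sub_eq_zero.1 (v.eq_zero_of_one_add_pow_eq_one (fun _ => hv0 _) hvtop Fact.out
    hvp hδp hi hδi)
  exact AlgHom.toLinearMap_injective (congrArg ofConv hf1)

/-- For a finite flat group scheme `𝒢 = Spec B` killed by `p` over the ring of integers
`𝒪_K` of a complete discrete valuation field of mixed characteristic `(0,p)` with
absolute ramification index `e`, the lower ramification subgroup `𝒢_i` vanishes for
`i > e/(p-1)`: any point of `B` with values in `𝒪_{K̄}` reducing to the zero point
modulo `m^{≥i}` is the zero point. -/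
theorem stmt8 (p e : ℕ) [Fact p.Prime] (he : 0 < e)
    (O : Type) [CommRing O] [IsDomain O] [IsDiscreteValuationRing O] [CharZero O]
    (π : O) (hπ : Irreducible π)
    (hram : Ideal.span {(p : O)} = Ideal.span {π} ^ e)
    (B : Type) [CommRing B] [HopfAlgebra O B] [Module.Finite O B] [Module.Flat O B]
    (hkill : ∀ (C : Type) [CommRing C] [Algebra O C] (f : B →ₐ[O] C),
      convPow O B C p f = (Algebra.ofId O C).comp (Bialgebra.counitAlgHom O B))
    (Obar : Type) [CommRing Obar] [IsDomain Obar] [Algebra O Obar]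
    [Algebra.IsIntegral O Obar]
    (Kbar : Type) [Field Kbar] [Algebra Obar Kbar] [IsFractionRing Obar Kbar]
    [IsAlgClosed Kbar]
    (v : AddValuation Obar (WithTop ℚ))
    (hvπ : v (algebraMap O Obar π) = ((1 : ℚ) : WithTop ℚ))
    (hv0 : ∀ x : Obar, 0 ≤ v x)
    (hvtop : ∀ x : Obar, v x = ⊤ → x = 0)
    (i : ℚ) (hi : (e : ℚ) / ((p : ℚ) - 1) < i)
    (I : Ideal Obar) (hI : ∀ x : Obar, x ∈ I ↔ ((i : ℚ) : WithTop ℚ) ≤ v x)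
    (f : B →ₐ[O] Obar)
    (hf : (Ideal.Quotient.mkₐ O I).comp f =
      (Ideal.Quotient.mkₐ O I).comp
        ((Algebra.ofId O Obar).comp (Bialgebra.counitAlgHom O B))) :
    f = (Algebra.ofId O Obar).comp (Bialgebra.counitAlgHom O B) :=
  stmt8_general p e O π hram B hkill Obar v hvπ hv0 hvtop i hi I hI f hf
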